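/- arXiv:2312.12555 — 4 statements merged into one kernel-verified Lean document; each statement's English description precedes it below -/
import Mathlib

section
/- Let B be an integral domain containing a field k of characteristic zero, and let D be a nonzero locally nilpotent derivation of B. Then the kernel A = ker(D) is factorially closed in B: if a, b ∈ B are nonzero and ab ∈ A, then a ∈ A and b ∈ A. -/
variable {k B : Type*} [Field k] [CharZero k] [CommRing B] [IsDomain B] [Algebra k B]

/-- A derivation is locally nilpotent if every element is killed by some iterate. -/
def IsLocallyNilpotentDeriv {R A : Type*} [CommRing R] [CommRing A] [Algebra R A]
    (D : Derivation R A A) : Prop :=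
  ∀ x : A, ∃ n : ℕ, (⇑D)^[n] x = 0

/-- The kernel of a derivation, as a subalgebra. -/
def Derivation.kerSubalgebra {R A : Type*} [CommRing R] [CommRing A] [Algebra R A]
    (D : Derivation R A A) : Subalgebra R A where
  carrier := {b | D b = 0}
  mul_mem' := by
    intro a b ha hb
    simp only [Set.mem_setOf_eq] at *
    rw [D.leibniz]
    simp [ha, hb]
  add_mem' := by
    intro a b ha hb
    simp only [Set.mem_setOf_eq] at *
    simp [ha, hb]
  algebraMap_mem' := by intro r; simp [Set.mem_setOf_eq]

/-!
If `D^[m] a ≠ 0 = D^[m+1] a` and `D^[n] b ≠ 0 = D^[n+1] b`, the Leibniz rule leaves a single term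
in `D^[m+n] (a * b)`, namely `(m+n).choose m • (D^[m] a * D^[n] b)`, which is nonzero in a domain
of characteristic zero. So `D (a * b) = 0` forces `m + n = 0`, i.e. `D a = 0 = D b`.
-/

namespace Derivation

open Finset

section CommSemiring

variable {R A : Type*} [CommSemiring R] [CommSemiring A] [Algebra R A] (D : Derivation R A A)

theorem iterate_apply_mul (n : ℕ) (a b : A) :
    D^[n] (a * b) = ∑ ij ∈ antidiagonal n, n.choose ij.1 • (D^[ij.1] a * D^[ij.2] b) := by
  induction n with
  | zero => simp
  | succ n ih =>
    rw [sum_antidiagonal_choose_succ_nsmul (M := A) (fun i j => D^[i] a * D^[j] b) n]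
    simp only [Function.iterate_succ_apply', ih, map_sum, map_nsmul, leibniz, smul_eq_mul,
      smul_add, sum_add_distrib]
    congr 1
    refine sum_congr rfl fun ⟨i, j⟩ hij ↦ ?_
    rw [n.choose_symm_of_eq_add (HasAntidiagonal.mem_antidiagonal.1 hij).symm, mul_comm]

theorem iterate_eq_zero_of_le {x : A} {m t : ℕ} (hm : D^[m] x = 0) (hmt : m ≤ t) :
    D^[t] x = 0 := by
  obtain ⟨s, rfl⟩ := Nat.exists_eq_add_of_le hmt
  rw [add_comm, Function.iterate_add_apply, hm, iterate_map_zero]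

theorem iterate_add_apply_mul {a b : A} {m n : ℕ} (ha : D^[m + 1] a = 0)
    (hb : D^[n + 1] b = 0) :
    D^[m + n] (a * b) = (m + n).choose m • (D^[m] a * D^[n] b) := by
  rw [iterate_apply_mul, sum_eq_single_of_mem (m, n) (HasAntidiagonal.mem_antidiagonal.2 rfl)]
  rintro ⟨i, j⟩ hij hne
  rw [HasAntidiagonal.mem_antidiagonal] at hij
  dsimp only at hij ⊢
  have him : i ≠ m := fun h ↦ hne (Prod.ext h (by omega))
  rcases him.lt_or_gt with hi | hi
  · rw [D.iterate_eq_zero_of_le hb (by omega), mul_zero, smul_zero]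
  · rw [D.iterate_eq_zero_of_le ha hi, zero_mul, smul_zero]

end CommSemiring

variable {R A : Type*} [CommRing R] [CommRing A] [Algebra R A] (D : Derivation R A A)

theorem iterate_add_apply_mul_ne_zero [IsDomain A] [CharZero A] {a b : A} {m n : ℕ}
    (ha : D^[m] a ≠ 0) (ha' : D^[m + 1] a = 0) (hb : D^[n] b ≠ 0) (hb' : D^[n + 1] b = 0) :
    D^[m + n] (a * b) ≠ 0 := by
  rw [D.iterate_add_apply_mul ha' hb']
  exact smul_ne_zero (Nat.choose_pos (Nat.le_add_right m n)).ne' (mul_ne_zero ha hb)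

theorem exists_iterate_ne_zero_and_iterate_succ_eq_zero (hLND : IsLocallyNilpotentDeriv D)
    {a : A} (ha : a ≠ 0) : ∃ m, D^[m] a ≠ 0 ∧ D^[m + 1] a = 0 :=
  Nat.exists_not_and_succ_of_not_zero_of_exists ha (hLND a)

end Derivation

theorem kernel_factorially_closed_general (D : Derivation k B B)
    (hLND : IsLocallyNilpotentDeriv D) :
    ∀ a b : B, a ≠ 0 → b ≠ 0 → D (a * b) = 0 → D a = 0 ∧ D b = 0 := by
  intro a b ha hb hab
  have : CharZero B := charZero_of_injective_algebraMap (algebraMap k B).injective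
  obtain ⟨m, ha, ha'⟩ := D.exists_iterate_ne_zero_and_iterate_succ_eq_zero hLND ha
  obtain ⟨n, hb, hb'⟩ := D.exists_iterate_ne_zero_and_iterate_succ_eq_zero hLND hb
  have hmn : m + n = 0 := by
    by_contra h
    have hab' : D^[1] (a * b) = 0 := hab
    exact D.iterate_add_apply_mul_ne_zero ha ha' hb hb' (D.iterate_eq_zero_of_le hab' (by omega))
  obtain ⟨rfl, rfl⟩ : m = 0 ∧ n = 0 := by omega
  exact ⟨ha', hb'⟩

/-- The kernel of a nonzero locally nilpotent derivation of a domain is factorially closed. -/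
theorem kernel_factorially_closed (D : Derivation k B B) (hD : D ≠ 0)
    (hLND : IsLocallyNilpotentDeriv D) :
    ∀ a b : B, a ≠ 0 → b ≠ 0 → D (a * b) = 0 → D a = 0 ∧ D b = 0 :=
  kernel_factorially_closed_general D hLND
end

section
/- Let B be an integral domain containing a field k of characteristic zero, and let D be a nonzero locally nilpotent derivation of B with kernel A. Then the transcendence degree of B over A (i.e., of Frac(B) over Frac(A)) equals 1. -/
variable {k B : Type*} [Field k] [CharZero k] [CommRing B] [IsDomain B] [Algebra k B]

/-!
Since `D` is locally nilpotent and nonzero, iterating it on an element not in the kernel gives a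
local slice `s`: `D s ≠ 0` and `D (D s) = 0`. On `A[s]`, `D` acts as `D s • d/ds`, so a polynomial
relation for `s` over `A` of minimal degree would have a derivative relation of smaller degree; in
characteristic zero this forces `s` to be transcendental. Conversely, by induction on the order of
nilpotency of `x`, some `(D s)^N * x` lies in `A[s]`: the inductive step integrates a polynomial in
`s` (possible in characteristic zero) and corrects by a kernel element. As `D s ∈ A` is nonzero,
`B` is algebraic over `A[s]`.
-/

open Polynomial

namespace Polynomial

theorem derivative_surjective_of_charZero_field (K : Type*) {R : Type*} [Field K] [CharZero K]
    [CommRing R] [Algebra K R] : Function.Surjective (derivative : R[X] →ₗ[R] R[X]) := by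
  intro q
  induction q using Polynomial.induction_on' with
  | add p q hp hq =>
    obtain ⟨P, rfl⟩ := hp
    obtain ⟨Q, rfl⟩ := hq
    exact ⟨P + Q, map_add _ _ _⟩
  | monomial n a =>
    refine ⟨monomial (n + 1) (((n : K) + 1)⁻¹ • a), ?_⟩
    have hn : ((n : K) + 1) ≠ 0 := Nat.cast_add_one_ne_zero n
    rw [derivative_monomial, Nat.add_sub_cancel, smul_mul_assoc, mul_comm]
    congr
    rw [← nsmul_eq_mul, ← Nat.cast_smul_eq_nsmul K, smul_smul, Nat.cast_add_one,
      inv_mul_cancel₀ hn, one_smul]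

end Polynomial

namespace Derivation

variable {R S : Type*} [CommRing R] [CommRing S] [Algebra R S]

@[simp]
theorem mem_kerSubalgebra {D : Derivation R S S} {x : S} : x ∈ D.kerSubalgebra ↔ D x = 0 :=
  Iff.rfl

def overKer (D : Derivation R S S) : Derivation D.kerSubalgebra S S where
  toFun := D
  map_add' := D.map_add
  map_smul' a x := by simp [Algebra.smul_def, D.leibniz, mem_kerSubalgebra.1 a.2]
  map_one_eq_zero' := D.map_one_eq_zero
  leibniz' := D.leibniz

theorem map_aeval_kerSubalgebra (D : Derivation R S S) (b : S) (p : D.kerSubalgebra[X]) :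
    D (aeval b p) = aeval b (derivative p) * D b :=
  D.overKer.map_aeval p b

theorem transcendental_kerSubalgebra [IsDomain S] [CharZero S] (D : Derivation R S S) {b : S}
    (hb : D b ≠ 0) : Transcendental D.kerSubalgebra b := by
  suffices h : ∀ p : D.kerSubalgebra[X], aeval b p = 0 → p = 0 from
    fun ⟨p, hp, hpb⟩ ↦ hp (h p hpb)
  intro p
  induction hn : p.natDegree using Nat.strong_induction_on generalizing p with
  | _ n ih =>
    intro hpb
    have hp'b : aeval b (derivative p) = 0 := by
      simpa [hb, hpb] using D.map_aeval_kerSubalgebra b p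
    have hp' : derivative p = 0 := by
      rcases eq_or_ne n 0 with rfl | hn0
      · exact derivative_of_natDegree_zero hn
      · exact ih _ (hn ▸ natDegree_derivative_lt (hn ▸ hn0)) _ rfl hp'b
    rw [eq_C_of_derivative_eq_zero hp'] at hpb ⊢
    simpa using hpb

theorem exists_mul_mem_adjoin_of_iterate_eq_zero {K : Type*} [Field K] [CharZero K] [Algebra K S]
    (D : Derivation K S S) {b : S} (hb : D (D b) = 0) (n : ℕ) {x : S} (hx : (⇑D)^[n] x = 0) :
    ∃ N : ℕ, (D b) ^ N * x ∈ Algebra.adjoin D.kerSubalgebra {b} := by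
  induction n generalizing x with
  | zero => exact ⟨0, by simp [show x = 0 from hx]⟩
  | succ n ih =>
    obtain ⟨M, hM⟩ := ih (x := D x) hx
    rw [Algebra.adjoin_singleton_eq_range_aeval] at hM ⊢
    obtain ⟨q, hq : aeval b q = D b ^ M * D x⟩ := hM
    obtain ⟨Q, hQ⟩ := derivative_surjective_of_charZero_field K q
    have hker : D ((D b) ^ (M + 1) * x - aeval b Q) = 0 := by
      rw [map_sub, D.map_aeval_kerSubalgebra, hQ, hq, D.leibniz, D.leibniz_pow, hb]
      simp only [smul_eq_mul, pow_succ]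
      ring
    exact ⟨M + 1, Q + C ⟨_, hker⟩, by simp⟩

theorem exists_map_ne_zero_map_map_eq_zero (D : Derivation R S S) {x : S} (hx : D x ≠ 0) (n : ℕ)
    (hn : (⇑D)^[n] x = 0) : ∃ s, D s ≠ 0 ∧ D (D s) = 0 := by
  induction n generalizing x with
  | zero => exact absurd (by simp [show x = 0 from hn]) hx
  | succ n ih =>
    by_cases hxx : D (D x) = 0
    · exact ⟨x, hx, hxx⟩
    · exact ih hxx hn

end Derivation

theorem Subalgebra.isAlgebraic_of_forall_exists_mul_mem {R S : Type*} [CommRing R] [CommRing S]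
    [IsDomain S] [Algebra R S] (A : Subalgebra R S)
    (h : ∀ x : S, ∃ c ∈ A, c ≠ 0 ∧ c * x ∈ A) : Algebra.IsAlgebraic A S := by
  refine ⟨fun x ↦ ?_⟩
  obtain ⟨c, hcA, hc, hcx⟩ := h x
  exact IsAlgebraic.of_smul (y := (⟨c, hcA⟩ : A))
    (mem_nonZeroDivisors_of_ne_zero (ne_of_apply_ne Subtype.val hc))
    (isAlgebraic_algebraMap (⟨_, hcx⟩ : A))

theorem IsLocallyNilpotentDeriv.isAlgebraic_adjoin {K S : Type*} [Field K] [CharZero K]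
    [CommRing S] [IsDomain S] [Algebra K S] {D : Derivation K S S}
    (hD : IsLocallyNilpotentDeriv D) {b : S} (hb : D b ≠ 0) (hbb : D (D b) = 0) :
    Algebra.IsAlgebraic (Algebra.adjoin D.kerSubalgebra {b}) S := by
  refine Subalgebra.isAlgebraic_of_forall_exists_mul_mem _ fun x ↦ ?_
  obtain ⟨n, hn⟩ := hD x
  obtain ⟨N, hN⟩ := D.exists_mul_mem_adjoin_of_iterate_eq_zero hbb n hn
  have hker : D ((D b) ^ N) = 0 := by simp [Derivation.leibniz_pow, hbb]
  exact ⟨_, Subalgebra.algebraMap_mem _ (⟨_, hker⟩ : D.kerSubalgebra), pow_ne_zero N hb, hN⟩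

/-- If D is a nonzero locally nilpotent derivation of the domain B with kernel A, then
the transcendence degree of B over A is 1: some single element of B forms a
transcendence basis of B over A. -/
theorem kernel_trdeg_one (D : Derivation k B B) (hD : D ≠ 0)
    (hLND : IsLocallyNilpotentDeriv D) :
    ∃ b : B, IsTranscendenceBasis (D.kerSubalgebra) (fun _ : Unit => b) := by
  have : CharZero B := charZero_of_injective_algebraMap (algebraMap k B).injective
  obtain ⟨x, hx⟩ : ∃ x, D x ≠ 0 := by
    by_contra! h
    exact hD (Derivation.ext h)
  obtain ⟨n, hn⟩ := hLND x
  obtain ⟨b, hb, hbb⟩ := D.exists_map_ne_zero_map_map_eq_zero hx n hn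
  refine ⟨b, isTranscendenceBasis_iff_algebraicIndependent_isAlgebraic.2 ⟨?_, ?_⟩⟩
  · exact algebraicIndependent_unique_type_iff.2 (D.transcendental_kerSubalgebra hb)
  · rw [Set.range_const]
    exact hLND.isAlgebraic_adjoin hb hbb
end

section
/- Let B be an integral domain containing a field k of characteristic zero. Suppose A₁ and A₂ are subrings of B, each factorially closed in B, with A₁ ⊆ A₂, and such that tr.deg_{A₁}(B) = tr.deg_{A₂}(B) = 1. Then A₁ = A₂. In particular, if D, E are nonzero locally nilpotent derivations of B with ker(D) ⊆ ker(E), then ker(D) = ker(E). -/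
variable {k B : Type*} [Field k] [CharZero k] [CommRing B] [IsDomain B] [Algebra k B]

/-- A subalgebra is factorially closed if whenever a product of two nonzero elements
lies in it, both factors lie in it. -/
def FactoriallyClosed {R A : Type*} [CommRing R] [CommRing A] [Algebra R A]
    (S : Subalgebra R A) : Prop :=
  ∀ a b : A, a ≠ 0 → b ≠ 0 → a * b ∈ S → a ∈ S ∧ b ∈ S

/-!
A factorially closed subalgebra `A` of a domain is algebraically closed in it: a nonzero root
of a polynomial over `A` with nonzero constant term `c` divides `c`. So an element of `A₂`
outside `A₁` is transcendental over `A₁`; as `tr.deg_{A₁} B = 1` it is then a transcendence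
basis, which makes `B` algebraic over `A₂`.

For a nonzero locally nilpotent derivation `D`, `ker D` is factorially closed because, by the
general Leibniz rule, the `D`-degree of a product is the sum of the degrees. A local slice `r`
(`D r ≠ 0`, `D (D r) = 0`) exists, it is transcendental over `ker D` since `D` differentiates
polynomials in `r`, and every `b` satisfies `(D r) ^ n * b ∈ (ker D)[r]` by integrating in `r`
one `D`-degree at a time; so `tr.deg_{ker D} B = 1`.
-/

open Polynomial

theorem IsAlgebraic.of_subalgebra_subset {R R' A : Type*} [CommRing R] [CommRing R'] [CommRing A]
    [Algebra R A] [Algebra R' A] {S : Subalgebra R A} {T : Subalgebra R' A}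
    (hST : (S : Set A) ⊆ T) {a : A} (ha : IsAlgebraic S a) : IsAlgebraic T a :=
  ha.ringHom_of_comp_eq (S.val.toRingHom.codRestrict T.toSubring fun s => hST s.2) (RingHom.id A)
    (fun _ _ h => Subtype.ext (congrArg (fun t : T => (t : A)) h)) rfl

theorem IsTranscendenceBasis.not_isAlgebraic {R A : Type*} [CommRing R] [Nontrivial R]
    [CommRing A] [Algebra R A] {ι : Type*} [Nonempty ι] {x : ι → A}
    (hx : IsTranscendenceBasis R x) : ¬ Algebra.IsAlgebraic R A :=
  fun h => (hx.isEmpty_iff_isAlgebraic.2 h).false (Classical.arbitrary ι)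

namespace FactoriallyClosed

variable {R A : Type*} [CommRing R] [CommRing A] [IsDomain A] [Algebra R A]

theorem mem_of_isAlgebraic {S : Subalgebra R A} (hS : FactoriallyClosed S) {a : A}
    (ha : IsAlgebraic S a) : a ∈ S := by
  rcases eq_or_ne a 0 with rfl | ha0
  · exact S.zero_mem
  obtain ⟨s, hs0, c, hc⟩ := ha.exists_nonzero_dvd (mem_nonZeroDivisors_of_ne_zero ha0)
  have hc0 : c ≠ 0 := by
    rintro rfl
    exact hs0 (Subtype.ext (by simpa using hc))
  exact (hS a c ha0 hc0 (hc ▸ s.2)).1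

theorem eq_of_le {A₁ A₂ : Subalgebra R A} (h₁ : FactoriallyClosed A₁) (hle : A₁ ≤ A₂)
    (ht₁ : ∃ b : A, IsTranscendenceBasis A₁ (fun _ : Unit => b))
    (ht₂ : ¬ Algebra.IsAlgebraic A₂ A) : A₁ = A₂ := by
  obtain ⟨b, hb⟩ := ht₁
  refine le_antisymm hle fun x hx => h₁.mem_of_isAlgebraic ?_
  by_contra hxt
  -- `{x}` is algebraically independent and has the size of the basis `{b}`.
  have hxb : IsTranscendenceBasis A₁ (fun _ : Unit => x) :=
    (algebraicIndependent_unique_type_iff (x := fun _ : Unit => x) |>.2 hxt)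
      |>.isTranscendenceBasis_of_lift_trdeg_le_of_finite hb.lift_cardinalMk_eq_trdeg.ge
  have hadj : (Algebra.adjoin A₁ (Set.range fun _ : Unit => x) : Set A) ⊆ A₂ :=
    show (Algebra.adjoin A₁ _).toSubring ≤ A₂.toSubring by
      rw [Algebra.adjoin_eq_ring_closure, Subring.closure_le]
      rintro _ (⟨a, rfl⟩ | ⟨_, rfl⟩)
      exacts [hle a.2, hx]
  exact ht₂ ⟨fun a => (hxb.isAlgebraic.1 a).of_subalgebra_subset hadj⟩

end FactoriallyClosed

open Finset in
theorem Derivation.iterate_map_mul {R A : Type*} [CommRing R] [CommRing A] [Algebra R A]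
    (D : Derivation R A A) (n : ℕ) (a b : A) :
    (⇑D)^[n] (a * b) =
      ∑ ij ∈ antidiagonal n, n.choose ij.1 • ((⇑D)^[ij.1] a * (⇑D)^[ij.2] b) := by
  induction n with
  | zero => simp
  | succ n ih =>
    rw [sum_antidiagonal_choose_succ_nsmul (fun i j => (⇑D)^[i] a * (⇑D)^[j] b) n]
    simp only [Function.iterate_succ_apply', ih, map_sum, map_nsmul, Derivation.leibniz,
      smul_eq_mul, smul_add, sum_add_distrib]
    congr 1
    refine sum_congr rfl fun ⟨i, j⟩ hij => ?_
    rw [mul_comm, n.choose_symm_of_eq_add (mem_antidiagonal.1 hij).symm]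

theorem Derivation.transcendental_of_apply_ne_zero {R A : Type*} [CommRing R] [IsAddTorsionFree R]
    [CommRing A] [NoZeroDivisors A] [Algebra R A] (hinj : Function.Injective (algebraMap R A))
    (D : Derivation R A A) {r : A} (hr : D r ≠ 0) : Transcendental R r := by
  rintro ⟨p, hp0, hpr⟩
  induction hn : p.natDegree using Nat.strong_induction_on generalizing p with
  | _ n ih =>
    rcases eq_or_ne n 0 with rfl | hn0
    · rw [eq_C_of_natDegree_eq_zero hn, aeval_C, map_eq_zero_iff _ hinj] at hpr
      exact hp0 (by rw [eq_C_of_natDegree_eq_zero hn, hpr, map_zero])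
    -- Applying `D` to `p(r) = 0` gives `p'(r) * D r = 0`, and `p'` is nonzero of lower degree.
    have hp'r : aeval r (derivative p) = 0 := by
      simpa [hpr, hr] using (D.map_aeval p r).symm
    have hp0' : p.natDegree ≠ 0 := hn ▸ hn0
    exact ih _ (hn ▸ natDegree_derivative_lt hp0') _ (derivative_ne_zero.2 hp0') hp'r rfl

def Derivation.overKer_s4 {R A : Type*} [CommRing R] [CommRing A] [Algebra R A]
    (D : Derivation R A A) : Derivation D.kerSubalgebra A A :=
  Derivation.mk'
    { toFun := D
      map_add' := D.map_add
      map_smul' := fun a x => show D (a * x) = a * D x by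
        rw [D.leibniz, show D (a : A) = 0 from a.2, smul_zero, add_zero, smul_eq_mul] }
    D.leibniz

@[simp]
theorem Derivation.overKer_apply {R A : Type*} [CommRing R] [CommRing A] [Algebra R A]
    (D : Derivation R A A) (a : A) : D.overKer_s4 a = D a := rfl

section Slice

variable {K A : Type*} [Field K] [CharZero K] [CommRing A] [Algebra K A]

theorem Derivation.exists_apply_eq_mul_apply (D : Derivation K A A) {r y : A}
    (hy : y ∈ Algebra.adjoin D.kerSubalgebra {r}) :
    ∃ z ∈ Algebra.adjoin D.kerSubalgebra {r}, D z = y * D r := by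
  rw [Algebra.adjoin_singleton_eq_range_aeval] at hy ⊢
  obtain ⟨p, rfl⟩ := hy
  induction p using Polynomial.induction_on' with
  | add p q hp hq =>
    obtain ⟨_, ⟨P, rfl⟩, hP⟩ := hp
    obtain ⟨_, ⟨Q, rfl⟩, hQ⟩ := hq
    exact ⟨_, ⟨P + Q, rfl⟩, by simp only [map_add, hP, hQ, add_mul]⟩
  | monomial j a =>
    -- `a X ^ j` has the antiderivative `a X ^ (j + 1) / (j + 1)`, which needs `(j + 1)⁻¹ ∈ K`.
    refine ⟨_, ⟨monomial (j + 1) (((j + 1 : ℕ) : K)⁻¹ • a), rfl⟩, ?_⟩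
    have hj : ((((j + 1 : ℕ) : K)⁻¹ • a) * ((j + 1 : ℕ) : D.kerSubalgebra)) = a := by
      rw [smul_mul_assoc, mul_comm, ← nsmul_eq_mul, ← Nat.cast_smul_eq_nsmul K, smul_smul,
        inv_mul_cancel₀ (Nat.cast_ne_zero.2 j.succ_ne_zero), one_smul]
    show D (aeval r _) = aeval r (monomial j a) * D r
    rw [← D.overKer_apply, D.overKer_s4.map_aeval, derivative_monomial, Nat.cast_add_one,
      ← Nat.cast_add_one, hj, Nat.add_sub_cancel, smul_eq_mul]
    rfl

theorem Derivation.pow_mul_mem_adjoin_of_iterate_eq_zero (D : Derivation K A A) {r : A}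
    (hr : D (D r) = 0) {m : ℕ} {b : A} (hb : (⇑D)^[m + 1] b = 0) :
    D r ^ m * b ∈ Algebra.adjoin D.kerSubalgebra {r} := by
  have mem_of_ker : ∀ {x : A}, D x = 0 → x ∈ Algebra.adjoin D.kerSubalgebra {r} :=
    fun hx => Subalgebra.algebraMap_mem _ (⟨_, hx⟩ : D.kerSubalgebra)
  induction m generalizing b with
  | zero => simpa using mem_of_ker hb
  | succ m ih =>
    obtain ⟨z, hz, hDz⟩ := D.exists_apply_eq_mul_apply (ih (b := D b) hb)
    have hker : D (D r ^ (m + 1) * b - z) = 0 := by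
      rw [map_sub, D.leibniz, D.leibniz_pow, hr, hDz]
      simp only [smul_eq_mul]
      ring
    rw [← sub_add_cancel (D r ^ (m + 1) * b) z]
    exact add_mem (mem_of_ker hker) hz

end Slice

namespace IsLocallyNilpotentDeriv

section

variable {R A : Type*} [CommRing R] [CommRing A] [Algebra R A] {D : Derivation R A A}

theorem exists_iterate_ne_zero_and_iterate_succ_eq_zero (hD : IsLocallyNilpotentDeriv D) {a : A}
    (ha : a ≠ 0) : ∃ m, (⇑D)^[m] a ≠ 0 ∧ (⇑D)^[m + 1] a = 0 := by
  obtain ⟨n, hn⟩ := hD a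
  induction n with
  | zero => exact absurd hn ha
  | succ n ih => exact (em ((⇑D)^[n] a = 0)).elim ih fun h => ⟨n, h, hn⟩

theorem factoriallyClosed_kerSubalgebra [NoZeroDivisors A] [CharZero A]
    (hD : IsLocallyNilpotentDeriv D) : FactoriallyClosed D.kerSubalgebra := by
  intro a b ha hb hab
  obtain ⟨m, ham, ham'⟩ := hD.exists_iterate_ne_zero_and_iterate_succ_eq_zero ha
  obtain ⟨l, hbl, hbl'⟩ := hD.exists_iterate_ne_zero_and_iterate_succ_eq_zero hb
  have vanish : ∀ {x : A} {j i : ℕ}, (⇑D)^[j] x = 0 → j ≤ i → (⇑D)^[i] x = 0 := by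
    intro x j i hx hji
    rw [← Nat.sub_add_cancel hji, Function.iterate_add_apply, hx, iterate_map_zero]
  have htop : (⇑D)^[m + l] (a * b) = (m + l).choose m • ((⇑D)^[m] a * (⇑D)^[l] b) := by
    rw [D.iterate_map_mul, Finset.sum_eq_single_of_mem (m, l) (by simp)]
    rintro ⟨i, j⟩ hij hne
    simp only [Finset.HasAntidiagonal.mem_antidiagonal] at hij
    rcases lt_trichotomy i m with h | rfl | h
    · rw [vanish hbl' (by omega), mul_zero, smul_zero]
    · exact absurd (by rw [show j = l by omega]) hne
    · rw [vanish ham' h, zero_mul, smul_zero]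
  have hml : m + l = 0 := by
    by_contra hml
    refine smul_ne_zero (Nat.choose_pos (Nat.le_add_right m l)).ne' (mul_ne_zero ham hbl) ?_
    rw [← htop]
    exact vanish (x := a * b) (j := 1) hab (by omega)
  obtain ⟨rfl, rfl⟩ : m = 0 ∧ l = 0 := by omega
  exact ⟨ham', hbl'⟩

end

variable {D : Derivation k B B}

theorem isTranscendenceBasis_kerSubalgebra (hD : IsLocallyNilpotentDeriv D) {r : B}
    (hr : D r ≠ 0) (hr' : D (D r) = 0) :
    IsTranscendenceBasis D.kerSubalgebra (fun _ : Unit => r) := by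
  have : CharZero B := charZero_of_injective_algebraMap (algebraMap k B).injective
  refine (algebraicIndependent_unique_type_iff.2 (D.overKer_s4.transcendental_of_apply_ne_zero
    Subtype.val_injective hr)).isTranscendenceBasis_iff_isAlgebraic.2 ⟨fun b => ?_⟩
  rw [Set.range_const]
  obtain ⟨m, hm⟩ := hD b
  have hmem := D.pow_mul_mem_adjoin_of_iterate_eq_zero hr' (m := m)
    (by rw [Function.iterate_succ_apply', hm, map_zero])
  have hpow : D r ^ m ∈ Algebra.adjoin D.kerSubalgebra {r} :=
    pow_mem (Subalgebra.algebraMap_mem _ (⟨D r, hr'⟩ : D.kerSubalgebra)) m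
  exact IsAlgebraic.of_smul (y := ⟨_, hpow⟩)
    (mem_nonZeroDivisors_of_ne_zero fun h => pow_ne_zero m hr (congrArg Subtype.val h))
    (isAlgebraic_algebraMap (⟨_, hmem⟩ : Algebra.adjoin D.kerSubalgebra {r}))

theorem exists_isTranscendenceBasis_kerSubalgebra (hD : IsLocallyNilpotentDeriv D) (hD0 : D ≠ 0) :
    ∃ r : B, IsTranscendenceBasis D.kerSubalgebra (fun _ : Unit => r) := by
  obtain ⟨x, hx⟩ : ∃ x, D x ≠ 0 := by
    by_contra! h
    exact hD0 (Derivation.ext h)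
  obtain ⟨n, hn, hn'⟩ := hD.exists_iterate_ne_zero_and_iterate_succ_eq_zero hx
  refine ⟨(⇑D)^[n] x, hD.isTranscendenceBasis_kerSubalgebra ?_ ?_⟩
  · rwa [← Function.iterate_succ_apply' (⇑D), Function.iterate_succ_apply]
  · rwa [← Function.iterate_succ_apply' (⇑D), ← Function.iterate_succ_apply' (⇑D),
      Function.iterate_succ_apply]

end IsLocallyNilpotentDeriv

theorem factorially_closed_trdeg_one_eq_general
    (A₁ A₂ : Subalgebra k B) (h₁ : FactoriallyClosed A₁)
    (hle : A₁ ≤ A₂)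
    (ht₁ : ∃ b : B, IsTranscendenceBasis A₁ (fun _ : Unit => b))
    (ht₂ : ∃ b : B, IsTranscendenceBasis A₂ (fun _ : Unit => b)) :
    A₁ = A₂ ∧
    ∀ D E : Derivation k B B, D ≠ 0 → E ≠ 0 →
      IsLocallyNilpotentDeriv D → IsLocallyNilpotentDeriv E →
      D.kerSubalgebra ≤ E.kerSubalgebra → D.kerSubalgebra = E.kerSubalgebra := by
  have : CharZero B := charZero_of_injective_algebraMap (algebraMap k B).injective
  have not_isAlgebraic : ∀ {S : Subalgebra k B},
      (∃ b : B, IsTranscendenceBasis S (fun _ : Unit => b)) → ¬ Algebra.IsAlgebraic S B :=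
    fun ⟨_, hb⟩ => hb.not_isAlgebraic
  refine ⟨h₁.eq_of_le hle ht₁ (not_isAlgebraic ht₂), fun D E hD hE hDnil hEnil hker => ?_⟩
  exact hDnil.factoriallyClosed_kerSubalgebra.eq_of_le hker
    (hDnil.exists_isTranscendenceBasis_kerSubalgebra hD)
    (not_isAlgebraic (hEnil.exists_isTranscendenceBasis_kerSubalgebra hE))

/-- Nested factorially closed subalgebras of transcendence degree one coincide; in
particular, kernels of nonzero locally nilpotent derivations satisfying an inclusion
coincide. -/
theorem factorially_closed_trdeg_one_eq
    (A₁ A₂ : Subalgebra k B) (h₁ : FactoriallyClosed A₁) (h₂ : FactoriallyClosed A₂)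
    (hle : A₁ ≤ A₂)
    (ht₁ : ∃ b : B, IsTranscendenceBasis A₁ (fun _ : Unit => b))
    (ht₂ : ∃ b : B, IsTranscendenceBasis A₂ (fun _ : Unit => b)) :
    A₁ = A₂ ∧
    ∀ D E : Derivation k B B, D ≠ 0 → E ≠ 0 →
      IsLocallyNilpotentDeriv D → IsLocallyNilpotentDeriv E →
      D.kerSubalgebra ≤ E.kerSubalgebra → D.kerSubalgebra = E.kerSubalgebra :=
  factorially_closed_trdeg_one_eq_general A₁ A₂ h₁ hle ht₁ ht₂
end

section
/- Let B be an integral domain containing a field k of characteristic zero, and let D, E be commuting locally nilpotent derivations of B with D nonzero and E nonzero. If E vanishes on ker(D), then ker(D) ⊆ ker(E), and consequently ker(D) = ker(E). -/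
variable {k B : Type*} [Field k] [CharZero k] [CommRing B] [IsDomain B] [Algebra k B]

/-!
Suppose `E b = 0` but `D b ≠ 0`. Some iterate `x = D^[i] b` is a local slice of `D`: `a = D x ≠ 0`
and `D a = 0`; moreover `E x = D^[i] (E b) = 0` since `E` commutes with `D`. Integrating monomials,
`s * x ^ j * a = D (s * x ^ (j + 1) / (j + 1))`, and inducting on the nilpotency order of `c`
shows `a ^ m * c ∈ (ker D)[x]` for some `m`. As `E` kills `ker D` and `x`, it kills `(ker D)[x]`,
so `a ^ m * E c = 0` for every `c`, and `E = 0` because `B` is a domain.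
-/

namespace Derivation

variable {R A : Type*} [CommRing R] [CommRing A] [Algebra R A]

/-- `(ker D)[x]`, as the additive closure of the monomials `s * x ^ j` with `D s = 0`
(scalars are absorbed into the coefficients `s`). -/
def kerAdjoin (D : Derivation R A A) (x : A) : AddSubmonoid A :=
  AddSubmonoid.closure {c | ∃ s j, D s = 0 ∧ c = s * x ^ j}

theorem mem_kerAdjoin_of_map_eq_zero (D : Derivation R A A) (x : A) {s : A} (hs : D s = 0) :
    s ∈ D.kerAdjoin x :=
  AddSubmonoid.subset_closure ⟨s, 0, hs, by rw [pow_zero, mul_one]⟩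

theorem map_eq_zero_of_mem_kerAdjoin {D E : Derivation R A A} {x c : A}
    (hvan : ∀ s, D s = 0 → E s = 0) (hx : E x = 0) (hc : c ∈ D.kerAdjoin x) : E c = 0 := by
  induction hc using AddSubmonoid.closure_induction with
  | mem c hc =>
    obtain ⟨s, j, hs, rfl⟩ := hc
    simp [leibniz_pow, hvan s hs, hx]
  | zero => exact map_zero E
  | add c d _ _ hc hd => rw [map_add, hc, hd, add_zero]

theorem exists_map_eq_mul_of_mem_kerAdjoin {K : Type*} [Field K] [CharZero K] [Algebra K A]
    (D : Derivation K A A) {x c : A} (hc : c ∈ D.kerAdjoin x) :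
    ∃ q ∈ D.kerAdjoin x, D q = D x * c := by
  induction hc using AddSubmonoid.closure_induction with
  | mem c hc =>
    obtain ⟨s, j, hs, rfl⟩ := hc
    set s' := (j + 1 : K)⁻¹ • s
    have hDs' : D s' = 0 := by rw [map_smul, hs, smul_zero]
    have hjs' : (j + 1 : ℕ) • s' = s := by
      rw [← Nat.cast_smul_eq_nsmul K, smul_smul, Nat.cast_add_one,
        mul_inv_cancel₀ (Nat.cast_add_one_ne_zero j), one_smul]
    refine ⟨s' * x ^ (j + 1), AddSubmonoid.subset_closure ⟨s', j + 1, hDs', rfl⟩, ?_⟩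
    rw [leibniz, hDs', smul_zero, add_zero, leibniz_pow, Nat.add_sub_cancel, ← hjs']
    simp only [smul_eq_mul, nsmul_eq_mul]
    ring
  | zero => exact ⟨0, zero_mem _, by rw [map_zero, mul_zero]⟩
  | add c d _ _ hc hd =>
    obtain ⟨q, hq, hDq⟩ := hc
    obtain ⟨r, hr, hDr⟩ := hd
    exact ⟨q + r, add_mem hq hr, by rw [map_add, hDq, hDr, mul_add]⟩

end Derivation

namespace IsLocallyNilpotentDeriv

variable {A : Type*} [CommRing A]

theorem exists_iterate_slice {R : Type*} [CommRing R] [Algebra R A] {D : Derivation R A A}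
    (hD : IsLocallyNilpotentDeriv D) {b : A} (hb : D b ≠ 0) :
    ∃ i : ℕ, D (D^[i] b) ≠ 0 ∧ D (D (D^[i] b)) = 0 := by
  obtain ⟨n, hn⟩ := hD b
  induction n generalizing b with
  | zero => exact absurd (by rw [show b = 0 from hn, map_zero]) hb
  | succ n ih =>
    by_cases hDDb : D (D b) = 0
    · exact ⟨0, hb, hDDb⟩
    · obtain ⟨i, hi⟩ := ih hDDb hn
      exact ⟨i + 1, hi⟩

theorem exists_pow_mul_mem_kerAdjoin {K : Type*} [Field K] [CharZero K] [Algebra K A]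
    {D : Derivation K A A} (hD : IsLocallyNilpotentDeriv D) {x : A} (hx : D (D x) = 0)
    (b : A) : ∃ m : ℕ, D x ^ m * b ∈ D.kerAdjoin x := by
  obtain ⟨n, hn⟩ := hD b
  induction n generalizing b with
  | zero => exact ⟨0, by rw [show b = 0 from hn, mul_zero]; exact zero_mem _⟩
  | succ n ih =>
    obtain ⟨m, hm⟩ := ih (D b) hn
    obtain ⟨q, hq, hDq⟩ := D.exists_map_eq_mul_of_mem_kerAdjoin hm
    have hconst : D (D x ^ (m + 1) * b - q) = 0 := by
      simp only [map_sub, Derivation.leibniz, Derivation.leibniz_pow, hx, hDq, smul_eq_mul]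
      ring
    refine ⟨m + 1, ?_⟩
    rw [← sub_add_cancel (D x ^ (m + 1) * b) q]
    exact add_mem (D.mem_kerAdjoin_of_map_eq_zero x hconst) hq

theorem ker_le_of_commute {K B : Type*} [Field K] [CharZero K] [CommRing B] [IsDomain B]
    [Algebra K B] {D E : Derivation K B B} (hD : IsLocallyNilpotentDeriv D)
    (hcomm : Function.Commute D E) (hvan : ∀ b, D b = 0 → E b = 0) (hE : E ≠ 0) :
    E.kerSubalgebra ≤ D.kerSubalgebra := by
  intro b (hEb : E b = 0)
  by_contra hDb
  obtain ⟨i, hDx, hDDx⟩ := hD.exists_iterate_slice hDb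
  set x := D^[i] b
  have hEx : E x = 0 := by
    rw [← (hcomm.iterate_left i).eq, hEb, Function.iterate_fixed (map_zero D)]
  refine hE (Derivation.ext fun c ↦ ?_)
  obtain ⟨m, hm⟩ := hD.exists_pow_mul_mem_kerAdjoin hDDx c
  have hEmul := Derivation.map_eq_zero_of_mem_kerAdjoin hvan hEx hm
  rw [Derivation.leibniz, Derivation.leibniz_pow, hvan _ hDDx] at hEmul
  simpa [hDx] using hEmul

end IsLocallyNilpotentDeriv

theorem kernels_eq_of_vanishing_general (D E : Derivation k B B) (hE : E ≠ 0)
    (hDL : IsLocallyNilpotentDeriv D)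
    (hcomm : ∀ b : B, D (E b) = E (D b))
    (hvan : ∀ b : B, D b = 0 → E b = 0) :
    D.kerSubalgebra ≤ E.kerSubalgebra ∧ D.kerSubalgebra = E.kerSubalgebra :=
  ⟨hvan, le_antisymm hvan (hDL.ker_le_of_commute hcomm hvan hE)⟩

/-- For commuting nonzero locally nilpotent derivations D and E of a domain B, if E
vanishes on ker D then ker D ⊆ ker E and consequently ker D = ker E. -/
theorem kernels_eq_of_vanishing (D E : Derivation k B B) (hD : D ≠ 0) (hE : E ≠ 0)
    (hDL : IsLocallyNilpotentDeriv D) (hEL : IsLocallyNilpotentDeriv E)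
    (hcomm : ∀ b : B, D (E b) = E (D b))
    (hvan : ∀ b : B, D b = 0 → E b = 0) :
    D.kerSubalgebra ≤ E.kerSubalgebra ∧ D.kerSubalgebra = E.kerSubalgebra :=
  kernels_eq_of_vanishing_general D E hE hDL hcomm hvan
end
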